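/- Let n ≥ 3 be an integer. If f ∈ ℝ⁴ has vanishing second component and satisfies B(n, n+1)·f = 0, then there exists h ∈ ℝ⁴ whose first and second components vanish such that M(n, n+1)·h = f. -/
import Mathlib


open Matrix

/-- The indicial family `I(D Ric − Λ, λ)` (with `Λ = n`) of the linearized Einstein
operator on asymptotically de Sitter space, in the scalar block decomposition. -/
noncomputable def M (n : ℕ) (lam : ℝ) : Matrix (Fin 4) (Fin 4) ℝ :=
  (1 / 2 : ℝ) • !![(n : ℝ) * (lam - 2), 0, -(n : ℝ) * lam * (lam - 2), 0;
                   0, 0, 0, 0;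
                   2 * (n : ℝ) - lam, 0, lam * (lam - 2 * (n : ℝ)), 0;
                   0, 0, 0, lam * (lam - (n : ℝ))]

/-- The indicial family `I(δG, λ)` of the divergence composed with trace reversal,
in the scalar block decomposition. -/
noncomputable def B (n : ℕ) (lam : ℝ) : Matrix (Fin 2) (Fin 4) ℝ :=
  (1 / 2 : ℝ) • !![lam - 2 * (n : ℝ), 0, (n : ℝ) * (lam - 2), 0;
                   0, 2 * (lam - ((n : ℝ) + 1)), 0, 0]

/-- Solvability of the linearized Einstein equation at the indicial weight `λ = n+1`:
if `f` has vanishing second component and `B(n,n+1)f = 0`, then `f = M(n,n+1)h` for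
some `h` whose first two components vanish. -/
theorem solvability_linearized_einstein_at_n_add_one (n : ℕ) (hn : 3 ≤ n)
    (f : Fin 4 → ℝ) (hf2 : f 1 = 0) (hf : (B n ((n : ℝ) + 1)).mulVec f = 0) :
    ∃ h : Fin 4 → ℝ, h 0 = 0 ∧ h 1 = 0 ∧ (M n ((n : ℝ) + 1)).mulVec h = f := by
  have hn1 : (1 : ℝ) ≤ (n : ℝ) := by exact_mod_cast (by omega : 1 ≤ n)
  have hne1 : ((n : ℝ) - 1) ≠ 0 := by nlinarith [show (3:ℝ) ≤ (n:ℝ) by exact_mod_cast hn]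
  have hne2 : ((n : ℝ) + 1) ≠ 0 := by positivity
  have h0 := congrFun hf 0
  simp [B, mulVec, dotProduct, Fin.sum_univ_four, hf2] at h0
  -- h0 : relation between f 0 and f 2
  refine ⟨![0, 0, -2 * f 2 / (((n:ℝ) + 1) * ((n:ℝ) - 1)), 2 * f 3 / ((n:ℝ) + 1)], rfl, rfl, ?_⟩
  funext i
  fin_cases i <;>
    simp [M, mulVec, dotProduct, Fin.sum_univ_four, hf2] <;>
    field_simp <;> nlinarith [h0, sq_nonneg ((n:ℝ) - 1)]
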